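/- For every g : ℤ³ \ {0} → ℂ with Σ_{k≠0} |g(k)|² < ∞, one has lim_{ν→0⁺} Σ_{k ∈ ℤ³, k ≠ 0} |k|⁻² |M̂₁^ν(k) − M̂₁^0(k)|² |g(k)|² = 0. -/
import Mathlib

set_option maxHeartbeats 1000000


/-- The Euclidean norm of `k ∈ ℤ³`. -/
noncomputable def knorm3 (k : ℤ × ℤ × ℤ) : ℝ :=
  Real.sqrt (((k.1 : ℝ)) ^ 2 + ((k.2.1 : ℝ)) ^ 2 + ((k.2.2 : ℝ)) ^ 2)

/-- The denominator `D_ν(k) = |k|²k₃² + (k₂² + ν|k|⁴)²` of the MG symbols. -/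
noncomputable def Dmg (ν : ℝ) (k : ℤ × ℤ × ℤ) : ℝ :=
  knorm3 k ^ 2 * ((k.2.2 : ℝ)) ^ 2 + (((k.2.1 : ℝ)) ^ 2 + ν * knorm3 k ^ 4) ^ 2

/-- The first MG Fourier multiplier symbol
`M̂₁^ν(k) = (k₂k₃|k|² − k₁k₃(k₂² + ν|k|⁴)) / D_ν(k)`
(in Lean, division by zero yields `0`, which matches the convention that the
symbol vanishes whenever `D_ν(k) = 0`). -/
noncomputable def M1mg (ν : ℝ) (k : ℤ × ℤ × ℤ) : ℝ :=
  ((k.2.1 : ℝ) * (k.2.2 : ℝ) * knorm3 k ^ 2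
    - (k.1 : ℝ) * (k.2.2 : ℝ) * (((k.2.1 : ℝ)) ^ 2 + ν * knorm3 k ^ 4)) / Dmg ν k

/-- The second MG Fourier multiplier symbol
`M̂₂^ν(k) = (−k₁k₃|k|² − k₂k₃(k₂² + ν|k|⁴)) / D_ν(k)`. -/
noncomputable def M2mg (ν : ℝ) (k : ℤ × ℤ × ℤ) : ℝ :=
  (-(k.1 : ℝ) * (k.2.2 : ℝ) * knorm3 k ^ 2
    - (k.2.1 : ℝ) * (k.2.2 : ℝ) * (((k.2.1 : ℝ)) ^ 2 + ν * knorm3 k ^ 4)) / Dmg ν k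

lemma knorm3_sq (k : ℤ × ℤ × ℤ) :
    knorm3 k ^ 2 = ((k.1 : ℝ)) ^ 2 + ((k.2.1 : ℝ)) ^ 2 + ((k.2.2 : ℝ)) ^ 2 := by
  rw [knorm3, Real.sq_sqrt (by positivity)]

lemma knorm3_nonneg (k : ℤ × ℤ × ℤ) : 0 ≤ knorm3 k := Real.sqrt_nonneg _

lemma int_one_le_sq {m : ℤ} (hm : m ≠ 0) : (1 : ℝ) ≤ (m : ℝ) ^ 2 := by
  have h : (1 : ℤ) ≤ m ^ 2 := by rcases hm.lt_or_gt with h | h <;> nlinarith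
  exact_mod_cast h

lemma one_le_knorm3 {k : ℤ × ℤ × ℤ} (hk : k ≠ 0) : 1 ≤ knorm3 k := by
  have h2 : (1 : ℝ) ≤ knorm3 k ^ 2 := by
    rw [knorm3_sq]
    have : k.1 ≠ 0 ∨ k.2.1 ≠ 0 ∨ k.2.2 ≠ 0 := by
      by_contra h
      push_neg at h
      exact hk (by ext <;> simp [h.1, h.2.1, h.2.2])
    rcases this with h | h | h
    · nlinarith [int_one_le_sq h, sq_nonneg ((k.2.1 : ℝ)), sq_nonneg ((k.2.2 : ℝ))]
    · nlinarith [int_one_le_sq h, sq_nonneg ((k.1 : ℝ)), sq_nonneg ((k.2.2 : ℝ))]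
    · nlinarith [int_one_le_sq h, sq_nonneg ((k.1 : ℝ)), sq_nonneg ((k.2.1 : ℝ))]
  nlinarith [knorm3_nonneg k]

lemma abs_M1mg_le {ν : ℝ} (hν : 0 ≤ ν) {k : ℤ × ℤ × ℤ} (hk : k ≠ 0) :
    |M1mg ν k| ≤ knorm3 k := by
  have hn1 : 1 ≤ knorm3 k := one_le_knorm3 hk
  have hn0 : (0 : ℝ) ≤ knorm3 k := by linarith
  by_cases hD : Dmg ν k = 0
  · rw [M1mg, hD, div_zero, abs_zero]; linarith
  · have hD0 : 0 ≤ Dmg ν k := by rw [Dmg]; positivity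
    have hDpos : 0 < Dmg ν k := lt_of_le_of_ne hD0 (Ne.symm hD)
    rw [M1mg, abs_div, abs_of_pos hDpos, div_le_iff₀ hDpos]
    set n := knorm3 k with hn
    set c1 := ((k.1 : ℝ)) with hc1
    set c2 := ((k.2.1 : ℝ)) with hc2
    set c3 := ((k.2.2 : ℝ)) with hc3
    have hsq : n ^ 2 = c1 ^ 2 + c2 ^ 2 + c3 ^ 2 := knorm3_sq k
    have hb0 : 0 ≤ c2 ^ 2 + ν * n ^ 4 := by positivity
    have hA1 : |c1| ≤ n := by
      nlinarith [sq_abs c1, abs_nonneg c1, sq_nonneg c2, sq_nonneg c3]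
    have hA3 : |c3| ≤ n := by
      nlinarith [sq_abs c3, abs_nonneg c3, sq_nonneg c1, sq_nonneg c2]
    have key : |c2 * c3 * n ^ 2 - c1 * c3 * (c2 ^ 2 + ν * n ^ 4)|
        ≤ |c2| * |c3| * n ^ 2 + |c1| * |c3| * (c2 ^ 2 + ν * n ^ 4) := by
      calc |c2 * c3 * n ^ 2 - c1 * c3 * (c2 ^ 2 + ν * n ^ 4)|
          ≤ |c2 * c3 * n ^ 2| + |c1 * c3 * (c2 ^ 2 + ν * n ^ 4)| := abs_sub _ _
        _ = |c2| * |c3| * n ^ 2 + |c1| * |c3| * (c2 ^ 2 + ν * n ^ 4) := by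
            rw [abs_mul, abs_mul, abs_mul, abs_mul, abs_of_nonneg (by positivity : (0:ℝ) ≤ n ^ 2),
              abs_of_nonneg hb0]
    refine key.trans ?_
    have hDmg : Dmg ν k = n ^ 2 * c3 ^ 2 + (c2 ^ 2 + ν * n ^ 4) ^ 2 := rfl
    set b := c2 ^ 2 + ν * n ^ 4 with hbdef
    -- second term: |c1||c3| b ≤ n * (n|c3|) * b ≤ n * D / 2 using AM-GM
    have h2 : 2 * (|c1| * |c3| * b) ≤ n * Dmg ν k := by
      have amgm : 2 * (n * |c3|) * b ≤ n ^ 2 * c3 ^ 2 + b ^ 2 := by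
        nlinarith [sq_nonneg (n * |c3| - b), sq_abs c3]
      have s1 : 2 * (|c1| * |c3| * b) ≤ 2 * (n * |c3|) * b := by
        have := mul_le_mul_of_nonneg_right hA1 (mul_nonneg (abs_nonneg c3) hb0)
        nlinarith
      have s3 : Dmg ν k ≤ n * Dmg ν k := by nlinarith [hDpos.le]
      rw [hDmg] at s3 ⊢
      linarith
    have h1 : 2 * (|c2| * |c3| * n ^ 2) ≤ n * Dmg ν k := by
      by_cases hc20 : k.2.1 = 0
      · have : c2 = 0 := by rw [hc2, hc20]; norm_num
        rw [this]
        simp only [abs_zero, zero_mul, mul_zero]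
        positivity
      · have hA2 : 1 ≤ |c2| := by
          have := int_one_le_sq hc20
          nlinarith [sq_abs c2, abs_nonneg c2]
        have hbge : c2 ^ 2 ≤ b := by
          have hnn : 0 ≤ ν * n ^ 4 := mul_nonneg hν (by positivity)
          rw [hbdef]; linarith
        have amgm : 2 * (n * |c3|) * c2 ^ 2 ≤ n ^ 2 * c3 ^ 2 + (c2 ^ 2) ^ 2 := by
          nlinarith [sq_nonneg (n * |c3| - c2 ^ 2), sq_abs c3]
        have hsq2 : (c2 ^ 2) ^ 2 ≤ b ^ 2 := by
          have := pow_le_pow_left₀ (sq_nonneg c2) hbge 2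
          linarith
        have step : 2 * (|c2| * |c3| * n) ≤ Dmg ν k := by
          have hcc : 0 ≤ |c2| ^ 2 - |c2| := by nlinarith [abs_nonneg c2]
          have e1 : 0 ≤ (|c2| ^ 2 - |c2|) * (|c3| * n) :=
            mul_nonneg hcc (mul_nonneg (abs_nonneg c3) hn0)
          have heq : |c2| ^ 2 * (|c3| * n) = c2 ^ 2 * (|c3| * n) := by rw [sq_abs]
          rw [hDmg]
          nlinarith [amgm, hsq2]
        calc 2 * (|c2| * |c3| * n ^ 2) = n * (2 * (|c2| * |c3| * n)) := by ring
          _ ≤ n * Dmg ν k := by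
              apply mul_le_mul_of_nonneg_left step hn0
    linarith [h1, h2]

lemma tendsto_M1 {k : ℤ × ℤ × ℤ} (hk : k ≠ 0) :
    Filter.Tendsto (fun ν : ℝ => M1mg ν k) (nhdsWithin 0 (Set.Ioi 0)) (nhds (M1mg 0 k)) := by
  by_cases h3 : ((k.2.2 : ℝ)) = 0
  · have heq : ∀ ν : ℝ, M1mg ν k = 0 := by intro ν; simp [M1mg, h3]
    simp only [heq]
    exact tendsto_const_nhds
  · have hn1 : 1 ≤ knorm3 k := one_le_knorm3 hk
    have hD : Dmg 0 k ≠ 0 := by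
      have h3sq : 0 < ((k.2.2 : ℝ)) ^ 2 := by positivity
      have hnsq : 0 < knorm3 k ^ 2 := by nlinarith
      have : 0 < Dmg 0 k := by
        rw [Dmg]
        have hp := mul_pos hnsq h3sq
        nlinarith [sq_nonneg (((k.2.1 : ℝ)) ^ 2 + 0 * knorm3 k ^ 4)]
      exact this.ne'
    have hnum : Continuous (fun ν : ℝ => (k.2.1 : ℝ) * (k.2.2 : ℝ) * knorm3 k ^ 2
        - (k.1 : ℝ) * (k.2.2 : ℝ) * (((k.2.1 : ℝ)) ^ 2 + ν * knorm3 k ^ 4)) := by fun_prop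
    have hden : Continuous (fun ν : ℝ => Dmg ν k) := by unfold Dmg; fun_prop
    have hc : ContinuousAt (fun ν : ℝ => M1mg ν k) 0 :=
      hnum.continuousAt.div hden.continuousAt hD
    exact hc.tendsto.mono_left nhdsWithin_le_nhds

/-- For every `g : ℤ³ \ {0} → ℂ` with `Σ_{k≠0} |g(k)|² < ∞`, one has
`lim_{ν→0⁺} Σ_{k ∈ ℤ³, k ≠ 0} |k|⁻² |M̂₁^ν(k) − M̂₁^0(k)|² |g(k)|² = 0`. -/
theorem mg_symbol_A4_convergence
    (g : {k : ℤ × ℤ × ℤ // k ≠ 0} → ℂ) (hg : Summable (fun k => ‖g k‖ ^ 2)) :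
    Filter.Tendsto (fun ν : ℝ =>
        ∑' k : {k : ℤ × ℤ × ℤ // k ≠ 0},
          (knorm3 k.1 ^ 2)⁻¹ * |M1mg ν k.1 - M1mg 0 k.1| ^ 2 * ‖g k‖ ^ 2)
      (nhdsWithin 0 (Set.Ioi 0)) (nhds 0) := by
  have hsum : Summable (fun k : {k : ℤ × ℤ × ℤ // k ≠ 0} => 4 * ‖g k‖ ^ 2) :=
    hg.mul_left 4
  have htend : ∀ k : {k : ℤ × ℤ × ℤ // k ≠ 0},
      Filter.Tendsto (fun ν : ℝ =>
          (knorm3 k.1 ^ 2)⁻¹ * |M1mg ν k.1 - M1mg 0 k.1| ^ 2 * ‖g k‖ ^ 2)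
        (nhdsWithin 0 (Set.Ioi 0)) (nhds 0) := by
    intro k
    have h1 : Filter.Tendsto (fun ν : ℝ => M1mg ν k.1 - M1mg 0 k.1)
        (nhdsWithin 0 (Set.Ioi 0)) (nhds 0) := by
      simpa using (tendsto_M1 k.2).sub (tendsto_const_nhds (x := M1mg 0 k.1))
    have h2 := ((h1.abs).pow 2)
    have h3 := (h2.const_mul ((knorm3 k.1 ^ 2)⁻¹)).mul_const (‖g k‖ ^ 2)
    simpa using h3
  have hbound : ∀ᶠ ν : ℝ in nhdsWithin 0 (Set.Ioi 0),
      ∀ k : {k : ℤ × ℤ × ℤ // k ≠ 0},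
        ‖(knorm3 k.1 ^ 2)⁻¹ * |M1mg ν k.1 - M1mg 0 k.1| ^ 2 * ‖g k‖ ^ 2‖
          ≤ 4 * ‖g k‖ ^ 2 := by
    filter_upwards [self_mem_nhdsWithin] with ν hν k
    have hνpos : (0 : ℝ) < ν := hν
    have hn1 : 1 ≤ knorm3 k.1 := one_le_knorm3 k.2
    have hn0 : (0 : ℝ) < knorm3 k.1 := by linarith
    have hb1 := abs_M1mg_le hνpos.le k.2
    have hb2 := abs_M1mg_le (le_refl (0 : ℝ)) k.2
    have hd : |M1mg ν k.1 - M1mg 0 k.1| ≤ 2 * knorm3 k.1 :=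
      (abs_sub _ _).trans (by linarith)
    have hdsq : |M1mg ν k.1 - M1mg 0 k.1| ^ 2 ≤ (2 * knorm3 k.1) ^ 2 :=
      pow_le_pow_left₀ (abs_nonneg _) hd 2
    rw [Real.norm_eq_abs, abs_of_nonneg (by positivity)]
    calc (knorm3 k.1 ^ 2)⁻¹ * |M1mg ν k.1 - M1mg 0 k.1| ^ 2 * ‖g k‖ ^ 2
        ≤ (knorm3 k.1 ^ 2)⁻¹ * (2 * knorm3 k.1) ^ 2 * ‖g k‖ ^ 2 := by
          gcongr
      _ = 4 * ‖g k‖ ^ 2 := by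
          field_simp
          ring
  have key := tendsto_tsum_of_dominated_convergence hsum htend hbound
  simpa using key
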